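/- arXiv:2205.10500 — 2 statements merged into one kernel-verified Lean document; each statement's English description precedes it below -/
import Mathlib

section
/- For any X, W ∈ ℝ^{n×p}, ⟨J_A(X)[W], X(X^T X - I_p)⟩ = (15/8) ⟨Φ(X^T W), (X^T X - I_p)^3⟩, where J_A(X)[W] = (1/8) W (15 I_p - 10 X^T X + 3 (X^T X)^2) - X Φ(X^T W) + (3/2) X Φ(Φ(X^T W)(X^T X - I_p)) and Φ(M) = (M + M^T)/2. -/
open Matrix

/-- The symmetrization operator `Φ(M) = (M + Mᵀ)/2`. -/
noncomputable def symPart {p : ℕ} (M : Matrix (Fin p) (Fin p) ℝ) : Matrix (Fin p) (Fin p) ℝ :=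
  (1 / 2 : ℝ) • (M + Mᵀ)

/-- The Jacobian of the constraint dissolving mapping at `X` applied to `W`. -/
noncomputable def cdJac {n p : ℕ} (X W : Matrix (Fin n) (Fin p) ℝ) :
    Matrix (Fin n) (Fin p) ℝ :=
  (1 / 8 : ℝ) • (W * ((15 : ℝ) • (1 : Matrix (Fin p) (Fin p) ℝ)
      - (10 : ℝ) • (Xᵀ * X) + (3 : ℝ) • (Xᵀ * X) ^ 2))
    - X * symPart (Xᵀ * W)
    + (3 / 2 : ℝ) • (X * symPart (symPart (Xᵀ * W) * (Xᵀ * X - 1)))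

/-!
Write `E = XᵀX - I` and `S = Φ(XᵀW)`. Every matrix occurring is a polynomial in `E`, hence
symmetric and commuting with `E`, and `XᵀW` paired against a symmetric matrix only sees its
symmetric part `S`. So each of the three terms of `⟨J_A(X)[W], XE⟩` equals `tr(S q(E))` for an
explicit polynomial `q`, and the three polynomials add up to `(15/8) E³`.
-/

section

variable {m n R : Type*} [Fintype m] [Fintype n] [CommRing R]

theorem Matrix.IsSymm.trace_transpose_mul {N : Matrix n n R} (hN : N.IsSymm)
    (M : Matrix n n R) : trace (Mᵀ * N) = trace (M * N) := by
  rw [← trace_transpose, transpose_mul, transpose_transpose, hN.eq, trace_mul_comm]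

theorem Matrix.IsSymm.mul_of_commute {M N : Matrix n n R} (hM : M.IsSymm) (hN : N.IsSymm)
    (h : Commute M N) : (M * N).IsSymm := by
  rw [IsSymm, transpose_mul, hM.eq, hN.eq, h.eq]

omit [Fintype n] in
theorem Matrix.isSymm_transpose_mul_self' (X : Matrix m n R) : (Xᵀ * X).IsSymm := by
  rw [IsSymm, transpose_mul, transpose_transpose]

theorem trace_transpose_mul_mul_mul (X : Matrix m n R) (M N : Matrix n n R) :
    trace ((X * M)ᵀ * (X * N)) = trace (Mᵀ * (Xᵀ * X * N)) := by
  simp only [transpose_mul, Matrix.mul_assoc]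

theorem trace_transpose_mul_mul_of_commute (X W : Matrix m n R) {P E : Matrix n n R}
    (hP : P.IsSymm) (hE : E.IsSymm) (hEP : Commute E P) :
    trace ((W * P)ᵀ * (X * E)) = trace (Xᵀ * W * (E * P)) := by
  rw [transpose_mul, hP.eq, Matrix.mul_assoc, trace_mul_comm, Matrix.mul_assoc, Matrix.mul_assoc,
    ← Matrix.mul_assoc Wᵀ, ← (hE.mul_of_commute hP hEP).trace_transpose_mul, transpose_mul,
    transpose_transpose]

end

theorem isSymm_symPart {p : ℕ} (M : Matrix (Fin p) (Fin p) ℝ) : (symPart M).IsSymm := by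
  simp only [IsSymm, symPart, transpose_smul, transpose_add, transpose_transpose, add_comm]

theorem trace_symPart_mul {p : ℕ} (M : Matrix (Fin p) (Fin p) ℝ) {N : Matrix (Fin p) (Fin p) ℝ}
    (hN : N.IsSymm) : trace (symPart M * N) = trace (M * N) := by
  rw [symPart, Matrix.smul_mul, Matrix.add_mul, trace_smul, trace_add, hN.trace_transpose_mul]
  simp only [smul_eq_mul]
  ring

theorem cdJac_polynomial_identity {A : Type*} [Ring A] [Algebra ℝ A] (E : A) :
    (1 / 8 : ℝ) • (E * ((15 : ℝ) • 1 - (10 : ℝ) • (1 + E) + (3 : ℝ) • (1 + E) ^ 2))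
      - (1 + E) * E + (3 / 2 : ℝ) • (E * ((1 + E) * E)) = (15 / 8 : ℝ) • E ^ 3 := by
  noncomm_ring
  module

theorem trace_transpose_cdJac_mul {n p : ℕ} (X W : Matrix (Fin n) (Fin p) ℝ)
    {E : Matrix (Fin p) (Fin p) ℝ} (hA : Xᵀ * X = 1 + E) :
    trace ((cdJac X W)ᵀ * (X * E)) = trace (symPart (Xᵀ * W) *
      ((1 / 8 : ℝ) • (E * ((15 : ℝ) • 1 - (10 : ℝ) • (1 + E) + (3 : ℝ) • (1 + E) ^ 2))
        - (1 + E) * E + (3 / 2 : ℝ) • (E * ((1 + E) * E)))) := by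
  have hE : E.IsSymm := by
    rw [← add_sub_cancel_left 1 E, ← hA]
    exact (isSymm_transpose_mul_self' X).sub isSymm_one
  have hS : (symPart (Xᵀ * W)).IsSymm := isSymm_symPart _
  set P : Matrix (Fin p) (Fin p) ℝ := (15 : ℝ) • 1 - (10 : ℝ) • (1 + E) + (3 : ℝ) • (1 + E) ^ 2
  have hEA : Commute E (1 + E) := (Commute.one_right E).add_right (Commute.refl E)
  have hEP : Commute E P := (((Commute.one_right E).smul_right _).sub_right
    (hEA.smul_right _)).add_right ((hEA.pow_right 2).smul_right _)
  have hP : P.IsSymm := ((isSymm_one.smul _).sub ((isSymm_one.add hE).smul _)).add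
    (((isSymm_one.add hE).pow 2).smul _)
  rw [Matrix.mul_add, Matrix.mul_sub, Matrix.mul_smul, Matrix.mul_smul, trace_add, trace_sub,
    trace_smul, trace_smul]
  conv_lhs => simp only [cdJac, hA, add_sub_cancel_left, transpose_add, transpose_sub,
    transpose_smul, Matrix.add_mul, Matrix.sub_mul, Matrix.smul_mul, trace_add, trace_sub, trace_smul]
  rw [trace_transpose_mul_mul_of_commute X W hP hE hEP,
    ← trace_symPart_mul (Xᵀ * W) (hE.mul_of_commute hP hEP),
    trace_transpose_mul_mul_mul X (symPart (Xᵀ * W)), hS.eq,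
    trace_transpose_mul_mul_mul X (symPart _), (isSymm_symPart _).eq, hA,
    trace_symPart_mul (symPart (Xᵀ * W) * E) ((isSymm_one.add hE).mul_of_commute hE hEA.symm),
    Matrix.mul_assoc _ E]

theorem stmt_10 {n p : ℕ} (X W : Matrix (Fin n) (Fin p) ℝ) :
    Matrix.trace ((cdJac X W)ᵀ * (X * (Xᵀ * X - 1))) =
      (15 / 8 : ℝ) * Matrix.trace ((symPart (Xᵀ * W))ᵀ * (Xᵀ * X - 1) ^ 3) := by
  obtain ⟨E, hA⟩ : ∃ E, Xᵀ * X = 1 + E := ⟨Xᵀ * X - 1, by abel⟩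
  rw [hA, add_sub_cancel_left, trace_transpose_cdJac_mul X W hA, cdJac_polynomial_identity,
    (isSymm_symPart _).eq, Matrix.mul_smul, trace_smul, smul_eq_mul]
end

section
/- Let β > 0, M_1 ≥ 0, and 0 < r < β/(2β + 8M_1). Suppose X ∈ ℝ^{n×p} satisfies 0 < ‖X^T X - I_p‖_F ≤ r. If D = J_A(X)[W] + β X(X^T X - I_p) where ‖Φ(X^T W)‖_F ≤ 2 M_1 and ⟨J_A(X)[W], X(X^T X - I_p)⟩ = (15/8)⟨Φ(X^T W), (X^T X - I_p)^3⟩, then ‖D‖_F ≥ (β/4) ‖X^T X - I_p‖_F. -/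
open Matrix

/-- Frobenius norm of a real matrix. -/
noncomputable def frob {m n : ℕ} (X : Matrix (Fin m) (Fin n) ℝ) : ℝ :=
  Real.sqrt (∑ i, ∑ j, (X i j) ^ 2)

/-!
Pair `D` with `XE`, where `E = XᵀX - I`. The hypothesis on the Jacobian gives
`⟨D, XE⟩ = (15/8)⟨Φ(XᵀW), E³⟩ + β‖XE‖²`, and `‖XE‖² = tr E³ + ‖E‖²` lies between
`‖E‖²(1 - ‖E‖)` and `4‖E‖²`. For `‖E‖ ≤ r` this makes `⟨D, XE⟩ ≥ (β/2)‖E‖²`, while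
Cauchy–Schwarz bounds it by `‖D‖ ‖XE‖ ≤ 2‖E‖ ‖D‖`.
-/

section Frobenius

variable {l m n : ℕ}

lemma frob_nonneg (A : Matrix (Fin m) (Fin n) ℝ) : 0 ≤ frob A := Real.sqrt_nonneg _

lemma frob_sq (A : Matrix (Fin m) (Fin n) ℝ) : frob A ^ 2 = trace (Aᵀ * A) := by
  rw [frob, Real.sq_sqrt (by positivity), trace]
  simp only [diag, mul_apply, transpose_apply, sq]
  exact Finset.sum_comm

lemma frob_eq_frobenius_norm (A : Matrix (Fin m) (Fin n) ℝ) :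
    frob A = @norm _ frobeniusSeminormedAddCommGroup.toNorm A := by
  rw [frob, frobenius_norm_def, Real.sqrt_eq_rpow]
  simp only [Real.norm_eq_abs, Real.rpow_two, sq_abs]

lemma frob_transpose (A : Matrix (Fin m) (Fin n) ℝ) : frob Aᵀ = frob A := by
  simp only [frob_eq_frobenius_norm, frobenius_norm_transpose]

lemma frob_mul_le (A : Matrix (Fin l) (Fin m) ℝ) (B : Matrix (Fin m) (Fin n) ℝ) :
    frob (A * B) ≤ frob A * frob B := by
  simp only [frob_eq_frobenius_norm]
  exact frobenius_norm_mul A B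

lemma frob_pow_succ_le (A : Matrix (Fin m) (Fin m) ℝ) (k : ℕ) :
    frob (A ^ (k + 1)) ≤ frob A ^ (k + 1) := by
  induction k with
  | zero => simp
  | succ k ih =>
    rw [pow_succ A, pow_succ (frob A)]
    exact (frob_mul_le _ _).trans (mul_le_mul_of_nonneg_right ih (frob_nonneg A))

lemma abs_trace_transpose_mul_le (A B : Matrix (Fin m) (Fin n) ℝ) :
    |trace (Aᵀ * B)| ≤ frob A * frob B := by
  have htrace : trace (Aᵀ * B) = ∑ i, ∑ j, A i j * B i j := by
    simp only [trace, diag, mul_apply, transpose_apply]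
    exact Finset.sum_comm
  rw [htrace, frob, frob, ← Real.sqrt_mul (by positivity)]
  refine Real.abs_le_sqrt ?_
  simp only [← Fintype.sum_prod_type']
  exact Finset.sum_mul_sq_le_sq_mul_sq _ _ _

lemma abs_trace_pow_three_le (A : Matrix (Fin m) (Fin m) ℝ) :
    |trace (A ^ 3)| ≤ frob A ^ 3 := by
  have h := abs_trace_transpose_mul_le Aᵀ (A ^ 2)
  rw [transpose_transpose, ← pow_succ', frob_transpose] at h
  calc |trace (A ^ 3)| ≤ frob A * frob (A ^ 2) := h
    _ ≤ frob A * frob A ^ 2 := by gcongr; exacts [frob_nonneg A, frob_pow_succ_le A 1]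
    _ = frob A ^ 3 := by ring

end Frobenius

/-- Writing `E = XᵀX - I`, we have `(XE)ᵀ(XE) = E(E + I)E = E³ + E²`. -/
lemma frob_mul_gram_sub_one_sq {n p : ℕ} (X : Matrix (Fin n) (Fin p) ℝ) :
    frob (X * (Xᵀ * X - 1)) ^ 2 = trace ((Xᵀ * X - 1) ^ 3) + frob (Xᵀ * X - 1) ^ 2 := by
  set E := Xᵀ * X - 1 with hE
  have hEsymm : Eᵀ = E := by simp [hE, transpose_sub, transpose_mul]
  have hgram : Xᵀ * X = E + 1 := by rw [hE]; abel
  rw [frob_sq, frob_sq, hEsymm, ← trace_add, transpose_mul, hEsymm, Matrix.mul_assoc,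
    ← Matrix.mul_assoc Xᵀ, hgram]
  congr 1
  noncomm_ring

lemma quarter_mul_le_of_inner_lower_bound {β M e q t s d : ℝ} (hβ : 0 < β) (hM : 0 ≤ M)
    (he : 0 < e) (hsmall : e * (2 * β + 8 * M) ≤ β)
    (hq : q ^ 2 = t + e ^ 2) (ht : |t| ≤ e ^ 3)
    (hs : -(2 * M * e ^ 3) ≤ s) (hd : 15 / 8 * s + β * q ^ 2 ≤ d * q) (hd0 : 0 ≤ d) :
    β / 4 * e ≤ d := by
  obtain ⟨ht_lower, ht_upper⟩ := abs_le.mp ht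
  have he_half : e ≤ 1 / 2 := by nlinarith
  have hq_le : q ≤ 2 * e := by nlinarith
  have hinner : β / 2 * e ^ 2 ≤ d * q := by
    nlinarith [mul_le_mul_of_nonneg_right hsmall (sq_nonneg e), mul_nonneg hM (pow_pos he 3).le]
  nlinarith [mul_le_mul_of_nonneg_left hq_le hd0]

theorem stmt_14_general {n p : ℕ} (β M₁ r : ℝ) (hβ : 0 < β) (hM₁ : 0 ≤ M₁)
    (hr' : r < β / (2 * β + 8 * M₁))
    (X W D : Matrix (Fin n) (Fin p) ℝ)
    (hfeas : 0 < frob (Xᵀ * X - 1)) (hfeas' : frob (Xᵀ * X - 1) ≤ r)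
    (hW : frob (symPart (Xᵀ * W)) ≤ 2 * M₁)
    (hinner : Matrix.trace ((cdJac X W)ᵀ * (X * (Xᵀ * X - 1))) =
      (15 / 8 : ℝ) * Matrix.trace ((symPart (Xᵀ * W))ᵀ * (Xᵀ * X - 1) ^ 3))
    (hD : D = cdJac X W + β • (X * (Xᵀ * X - 1))) :
    frob D ≥ (β / 4) * frob (Xᵀ * X - 1) := by
  set E := Xᵀ * X - 1
  set Φ := symPart (Xᵀ * W)
  have hsmall : frob E * (2 * β + 8 * M₁) ≤ β :=
    ((lt_div_iff₀ (by positivity)).mp (hfeas'.trans_lt hr')).le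
  have hD_inner : trace (Dᵀ * (X * E)) = 15 / 8 * trace (Φᵀ * E ^ 3) + β * frob (X * E) ^ 2 := by
    rw [hD, transpose_add, transpose_smul, Matrix.add_mul, Matrix.smul_mul, trace_add,
      trace_smul, hinner, frob_sq, smul_eq_mul]
  have hΦ : -(2 * M₁ * frob E ^ 3) ≤ trace (Φᵀ * E ^ 3) := by
    refine neg_le_of_abs_le ((abs_trace_transpose_mul_le Φ (E ^ 3)).trans ?_)
    exact mul_le_mul hW (frob_pow_succ_le E 2) (frob_nonneg _) (by linarith [frob_nonneg Φ])
  exact quarter_mul_le_of_inner_lower_bound hβ hM₁ hfeas hsmall (frob_mul_gram_sub_one_sq X)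
    (abs_trace_pow_three_le E) hΦ
    (hD_inner ▸ le_of_abs_le (abs_trace_transpose_mul_le D (X * E))) (frob_nonneg D)

theorem stmt_14 {n p : ℕ} (β M₁ r : ℝ) (hβ : 0 < β) (hM₁ : 0 ≤ M₁)
    (hr : 0 < r) (hr' : r < β / (2 * β + 8 * M₁))
    (X W D : Matrix (Fin n) (Fin p) ℝ)
    (hfeas : 0 < frob (Xᵀ * X - 1)) (hfeas' : frob (Xᵀ * X - 1) ≤ r)
    (hW : frob (symPart (Xᵀ * W)) ≤ 2 * M₁)
    (hinner : Matrix.trace ((cdJac X W)ᵀ * (X * (Xᵀ * X - 1))) =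
      (15 / 8 : ℝ) * Matrix.trace ((symPart (Xᵀ * W))ᵀ * (Xᵀ * X - 1) ^ 3))
    (hD : D = cdJac X W + β • (X * (Xᵀ * X - 1))) :
    frob D ≥ (β / 4) * frob (Xᵀ * X - 1) :=
  stmt_14_general β M₁ r hβ hM₁ hr' X W D hfeas hfeas' hW hinner hD
end
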